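/- Let r ≥ 1, let T be a heavy family of r-element subsets of [n], and let H = ↓T. Writing H_k = H ∩ L_k for the sets of size k in H, for every k with 0 ≤ k ≤ r − 1 we have (2(r − k) − 1)·|H_k| ≤ (k + 1)·|H_{k+1}|. -/

import Mathlib

open scoped Classical

/-- The width of a finite family of finite sets: the maximum size of an
antichain (under inclusion) contained in the family. -/
noncomputable def width (F : Finset (Finset ℕ)) : ℕ :=
  (F.powerset.filter (fun A => ∀ x ∈ A, ∀ y ∈ A, x ≠ y → ¬ x ⊆ y)).sup Finset.card

/-- The downset generated by a family of finite sets. -/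
def downGen (T : Finset (Finset ℕ)) : Finset (Finset ℕ) :=
  T.biUnion Finset.powerset

/-!
Fix `A ∈ H` with `|A| = k`, let `𝒞` be the members of `T` containing `A` and `U` their
union. The sets `C \ {x}` with `C ∈ 𝒞`, `x ∉ A` are not below any member of `T \ 𝒞`, so
together with `T \ 𝒞` they form an antichain in `H`; heaviness bounds their number by `|𝒞|`.
Local LYM inside `U`, relative to `A`, then forces `|U| ≥ 2r - k - 1`, so `A` lies below the
at least `2(r - k) - 1` sets `A ∪ {x}`, `x ∈ U \ A`, of `H_{k+1}`. Double counting the pairs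
`A ⊂ B` between `H_k` and `H_{k+1}`, where each `B` covers at most `k + 1` sets, gives the
inequality.
-/

open Finset
open scoped FinsetFamily

namespace Finset

variable {α : Type*} [DecidableEq α]

/-- With `A = ∅` this is the local LYM inequality inside the ground set `U`. -/
theorem card_mul_le_card_shadow_filter_mul {𝒜 : Finset (Finset α)} {A U : Finset α} {r : ℕ}
    (h𝒜 : (𝒜 : Set (Finset α)).Sized r) (hA𝒜U : ∀ s ∈ 𝒜, A ⊆ s ∧ s ⊆ U) :
    #𝒜 * (r - #A) ≤ #((∂ 𝒜).filter (A ⊆ ·)) * (#U - r + 1) := by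
  refine card_mul_le_card_mul' (· ⊆ ·) (fun s hs => ?_) (fun t ht => ?_)
  · obtain ⟨hAs, -⟩ := hA𝒜U s hs
    rw [← h𝒜 hs, ← card_sdiff_of_subset hAs,
      ← card_image_of_injOn (s.erase_injOn.mono sdiff_subset)]
    refine card_le_card fun u hu => ?_
    obtain ⟨a, ha, rfl⟩ := mem_image.1 hu
    obtain ⟨has, haA⟩ := mem_sdiff.1 ha
    exact (mem_bipartiteBelow _).2 ⟨mem_filter.2 ⟨erase_mem_shadow hs has,
      fun x hx => mem_erase.2 ⟨ne_of_mem_of_not_mem hx haA, hAs hx⟩⟩, erase_subset _ _⟩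
  · obtain ⟨s, hs, a, has, rfl⟩ := mem_shadow_iff.1 (mem_filter.1 ht).1
    have hsU := (hA𝒜U s hs).2
    have hr : 1 ≤ r := h𝒜 hs ▸ card_pos.2 ⟨a, has⟩
    calc #(𝒜.bipartiteAbove (· ⊆ ·) (s.erase a))
        ≤ #((U \ s.erase a).image (insert · (s.erase a))) := by
          refine card_le_card fun u hu => ?_
          obtain ⟨hu𝒜, hsu⟩ := (mem_bipartiteAbove _).1 hu
          obtain ⟨b, hb, rfl⟩ := exists_eq_insert_iff.2 ⟨hsu, by
            rw [h𝒜 hu𝒜, card_erase_of_mem has, h𝒜 hs]; omega⟩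
          exact mem_image_of_mem _
            (mem_sdiff.2 ⟨(hA𝒜U _ hu𝒜).2 (mem_insert_self _ _), hb⟩)
      _ ≤ #(U \ s.erase a) := card_image_le
      _ = #U - (r - 1) := by
          rw [card_sdiff_of_subset ((erase_subset _ _).trans hsU), card_erase_of_mem has, h𝒜 hs]
      _ ≤ #U - r + 1 := tsub_tsub_le_tsub_add

theorem card_bipartiteBelow_le_succ {𝒜 : Finset (Finset α)} {B : Finset α} {k : ℕ}
    (h𝒜 : (𝒜 : Set (Finset α)).Sized k) (hB : #B = k + 1) :
    #(𝒜.bipartiteBelow (· ⊆ ·) B) ≤ k + 1 :=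
  calc #(𝒜.bipartiteBelow (· ⊆ ·) B) ≤ #(B.powersetCard k) := card_le_card fun s hs =>
        have ⟨hs𝒜, hsB⟩ := (mem_bipartiteBelow _).1 hs
        mem_powersetCard.2 ⟨hsB, h𝒜 hs𝒜⟩
    _ = k + 1 := by rw [card_powersetCard, hB, Nat.choose_succ_self_right]

end Finset

lemma mem_downGen {T : Finset (Finset ℕ)} {A : Finset ℕ} :
    A ∈ downGen T ↔ ∃ C ∈ T, A ⊆ C := by
  simp [downGen]

lemma card_le_width {F 𝒜 : Finset (Finset ℕ)} (h𝒜F : 𝒜 ⊆ F)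
    (h𝒜 : IsAntichain (· ⊆ ·) (𝒜 : Set (Finset ℕ))) : #𝒜 ≤ width F :=
  le_sup (f := card) (mem_filter.2 ⟨mem_powerset.2 h𝒜F, fun _ hx _ hy hxy => h𝒜 hx hy hxy⟩)

lemma shadow_subset_downGen (T : Finset (Finset ℕ)) : ∂ T ⊆ downGen T := fun _ ht =>
  have ⟨C, hC, htC⟩ := exists_subset_of_mem_shadow ht
  mem_downGen.2 ⟨C, hC, htC⟩

theorem card_le_card_of_subset_shadow_of_heavy {T 𝒞 𝒮 : Finset (Finset ℕ)} {r : ℕ}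
    (hT : (T : Set (Finset ℕ)).Sized r) (heavy : width (downGen T) ≤ #T) (h𝒞T : 𝒞 ⊆ T)
    (h𝒮 : 𝒮 ⊆ ∂ 𝒞) (hprivate : ∀ s ∈ 𝒮, ∀ C ∈ T \ 𝒞, ¬ s ⊆ C) : #𝒮 ≤ #𝒞 := by
  have h𝒮r : ∀ s ∈ 𝒮, #s + 1 = r := fun s hs =>
    have ⟨C, hC, hsC, hcard⟩ := mem_shadow_iff_exists_mem_card_add_one.1 (h𝒮 hs)
    hcard ▸ hT (h𝒞T hC)
  have hdisj : Disjoint (T \ 𝒞) 𝒮 :=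
    disjoint_right.2 fun s hs hsT => hprivate s hs s hsT subset_rfl
  have hanti : IsAntichain (· ⊆ ·) ((T \ 𝒞 ∪ 𝒮 : Finset (Finset ℕ)) : Set (Finset ℕ)) := by
    rw [coe_union, isAntichain_union]
    refine ⟨(hT.mono (coe_subset.2 sdiff_subset)).isAntichain,
      (Set.Sized.isAntichain (r := r - 1) fun s hs => by have := h𝒮r s hs; omega),
      fun C hC s hs _ => ⟨fun hCs => ?_, hprivate s hs C hC⟩⟩
    have := card_le_card hCs
    have := h𝒮r s hs
    have := hT (sdiff_subset hC)
    omega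
  have hsub : T \ 𝒞 ∪ 𝒮 ⊆ downGen T := union_subset
    (sdiff_subset.trans fun C hC => mem_downGen.2 ⟨C, hC, subset_rfl⟩)
    (h𝒮.trans ((shadow_mono h𝒞T).trans (shadow_subset_downGen T)))
  have := (card_le_width hsub hanti).trans heavy
  rw [card_union_of_disjoint hdisj, card_sdiff_of_subset h𝒞T] at this
  have := card_le_card h𝒞T
  omega

theorem two_mul_sub_one_le_card_bipartiteAbove {T : Finset (Finset ℕ)} {r : ℕ}
    (hT : (T : Set (Finset ℕ)).Sized r) (heavy : width (downGen T) ≤ #T)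
    {A : Finset ℕ} (hA : A ∈ downGen T) :
    2 * (r - #A) - 1 ≤ #(((downGen T).filter (#· = #A + 1)).bipartiteAbove (· ⊆ ·) A) := by
  set 𝒞 := T.filter (A ⊆ ·)
  set U := 𝒞.sup id
  obtain ⟨C, hCT, hAC⟩ := mem_downGen.1 hA
  have hC𝒞 : C ∈ 𝒞 := mem_filter.2 ⟨hCT, hAC⟩
  have hCU : C ⊆ U := le_sup (f := id) hC𝒞
  have hLYM : #𝒞 * (r - #A) ≤ #((∂ 𝒞).filter (A ⊆ ·)) * (#U - r + 1) :=
    card_mul_le_card_shadow_filter_mul (hT.mono (coe_subset.2 (filter_subset _ _)))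
      fun s hs => ⟨(mem_filter.1 hs).2, le_sup (f := id) hs⟩
  have hheavy : #((∂ 𝒞).filter (A ⊆ ·)) ≤ #𝒞 :=
    card_le_card_of_subset_shadow_of_heavy hT heavy (filter_subset _ _) (filter_subset _ _)
      fun s hs D hD hsD => (mem_sdiff.1 hD).2
        (mem_filter.2 ⟨(mem_sdiff.1 hD).1, (mem_filter.1 hs).2.trans hsD⟩)
  have hle : r - #A ≤ #U - r + 1 :=
    le_of_mul_le_mul_left (hLYM.trans (Nat.mul_le_mul_right _ hheavy)) (card_pos.2 ⟨C, hC𝒞⟩)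
  have hup : #U - #A ≤ #(((downGen T).filter (#· = #A + 1)).bipartiteAbove (· ⊆ ·) A) := by
    rw [← card_sdiff_of_subset (hAC.trans hCU),
      ← card_image_of_injOn ((insert_inj_on A).mono fun x hx => (mem_sdiff.1 hx).2)]
    refine card_le_card fun B hB => ?_
    obtain ⟨x, hx, rfl⟩ := mem_image.1 hB
    obtain ⟨hxU, hxA⟩ := mem_sdiff.1 hx
    obtain ⟨D, hD, hxD⟩ := mem_sup.1 hxU
    obtain ⟨hDT, hAD⟩ := mem_filter.1 hD
    exact (mem_bipartiteAbove _).2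
      ⟨mem_filter.2 ⟨mem_downGen.2 ⟨D, hDT, insert_subset hxD hAD⟩, card_insert_of_notMem hxA⟩,
        subset_insert _ _⟩
  have := hT hCT
  have := card_le_card hCU
  omega

theorem heavy_level_inequality_general (r k : ℕ) (T : Finset (Finset ℕ))
    (hTr : ∀ A ∈ T, A.card = r)
    (heavy : width (downGen T) ≤ T.card) :
    (2 * (r - k) - 1) * ((downGen T).filter (fun A => A.card = k)).card ≤
      (k + 1) * ((downGen T).filter (fun A => A.card = k + 1)).card := by
  rw [mul_comm, mul_comm (k + 1)]
  refine card_mul_le_card_mul (· ⊆ ·) (fun A hA => ?_) (fun B hB => ?_)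
  · obtain ⟨hAT, rfl⟩ := mem_filter.1 hA
    exact two_mul_sub_one_le_card_bipartiteAbove (fun C hC => hTr C hC) heavy hAT
  · exact card_bipartiteBelow_le_succ (fun A hA => (mem_filter.1 hA).2) (mem_filter.1 hB).2

/-- In the downset `H` generated by a heavy family of `r`-sets, for every
`0 ≤ k ≤ r - 1` the level sizes satisfy `(2(r-k)-1)·|H_k| ≤ (k+1)·|H_{k+1}|`. -/
theorem heavy_level_inequality (n r k : ℕ) (hr : 1 ≤ r) (T : Finset (Finset ℕ))
    (hT : ∀ A ∈ T, A ⊆ Finset.Icc 1 n)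
    (hTr : ∀ A ∈ T, A.card = r)
    (heavy : width (downGen T) ≤ T.card)
    (hk : k ≤ r - 1) :
    (2 * (r - k) - 1) * ((downGen T).filter (fun A => A.card = k)).card ≤
      (k + 1) * ((downGen T).filter (fun A => A.card = k + 1)).card :=
  heavy_level_inequality_general r k T hTr heavy
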